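/- The reducibility predicate is closed under β-conversion of the subject: if Γ ⊨_S M : A and Γ ⊢ M' : A in λS* and M ≡_β M', then Γ ⊨_S M' : A. -/

import Mathlib

/-- Terms of a generic λ-calculus with sorts `S` and constants `C` (de Bruijn indices). -/
inductive Tm (S : Type) (C : Type) : Type
  | sort : S → Tm S C
  | const : C → Tm S C
  | var : Nat → Tm S C
  | app : Tm S C → Tm S C → Tm S C
  | lam : Tm S C → Tm S C → Tm S C
  | pi : Tm S C → Tm S C → Tm S C

namespace Tm
variable {S C : Type}

/-- Lifting of de Bruijn indices ≥ k by d. -/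
def lift (d k : Nat) : Tm S C → Tm S C
  | sort s => sort s
  | const c => const c
  | var i => if i < k then var i else var (i + d)
  | app m n => app (m.lift d k) (n.lift d k)
  | lam a m => lam (a.lift d k) (m.lift d (k+1))
  | pi a b => pi (a.lift d k) (b.lift d (k+1))

/-- Substitution of variable k by N. -/
def subst (k : Nat) (N : Tm S C) : Tm S C → Tm S C
  | sort s => sort s
  | const c => const c
  | var i => if i < k then var i else if i = k then N.lift k 0 else var (i-1)
  | app m n => app (subst k N m) (subst k N n)
  | lam a m => lam (subst k N a) (subst (k+1) N m)
  | pi a b => pi (subst k N a) (subst (k+1) N b)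

/-- Lifting a simultaneous substitution under a binder. -/
def upσ (σ : Nat → Tm S C) : Nat → Tm S C
  | 0 => var 0
  | i+1 => (σ i).lift 1 0

/-- Simultaneous substitution. -/
def msubst (σ : Nat → Tm S C) : Tm S C → Tm S C
  | sort s => sort s
  | const c => const c
  | var i => σ i
  | app m n => app (m.msubst σ) (n.msubst σ)
  | lam a m => lam (a.msubst σ) (m.msubst (upσ σ))
  | pi a b => pi (a.msubst σ) (b.msubst (upσ σ))

end Tm

/-- A rewrite rule [Δ] l ↝ r. -/
abbrev Rule (S C : Type) := List (Tm S C) × Tm S C × Tm S C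

/-- One-step βR-reduction (contextual closure of β together with rules of R). -/
inductive Step {S C : Type} (R : Rule S C → Prop) : Tm S C → Tm S C → Prop
  | beta {A M N} : Step R (.app (.lam A M) N) (Tm.subst 0 N M)
  | rew {Δ l r} (σ : Nat → Tm S C) : R (Δ, l, r) → Step R (l.msubst σ) (r.msubst σ)
  | appL {M M' N} : Step R M M' → Step R (.app M N) (.app M' N)
  | appR {M N N'} : Step R N N' → Step R (.app M N) (.app M N')
  | lamA {A A' M} : Step R A A' → Step R (.lam A M) (.lam A' M)
  | lamM {A M M'} : Step R M M' → Step R (.lam A M) (.lam A M')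
  | piA {A A' B} : Step R A A' → Step R (.pi A B) (.pi A' B)
  | piB {A B B'} : Step R B B' → Step R (.pi A B) (.pi A B')

/-- The empty rewrite system: pure β-reduction. -/
def NoRules {S C : Type} : Rule S C → Prop := fun _ => False

/-- Multistep reduction. -/
abbrev Red {S C : Type} (R : Rule S C → Prop) : Tm S C → Tm S C → Prop :=
  Relation.ReflTransGen (Step R)

/-- Conversion: smallest congruence containing the reduction. -/
abbrev Conv {S C : Type} (R : Rule S C → Prop) : Tm S C → Tm S C → Prop :=
  Relation.EqvGen (Step R)

/-- Pure β-reduction and conversion. -/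
abbrev BetaRed {S C : Type} : Tm S C → Tm S C → Prop := Red NoRules
abbrev BetaConv {S C : Type} : Tm S C → Tm S C → Prop := Conv NoRules

/-- Confluence of a relation. -/
def Confluent {X : Type} (r : X → X → Prop) : Prop :=
  ∀ a b c, Relation.ReflTransGen r a b → Relation.ReflTransGen r a c →
    ∃ d, Relation.ReflTransGen r b d ∧ Relation.ReflTransGen r c d

/-- A PTS specification: a set of sorts, axioms and rules. -/
structure Spec (S : Type) where
  sorts : Set S
  ax : S → S → Prop
  ru : S → S → S → Prop

/-- Functional specifications. -/
def Spec.Functional {S : Type} (sp : Spec S) : Prop :=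
  (∀ s₁ s₂ s₂', sp.ax s₁ s₂ → sp.ax s₁ s₂' → s₂ = s₂') ∧
  (∀ s₁ s₂ s₃ s₃', sp.ru s₁ s₂ s₃ → sp.ru s₁ s₂ s₃' → s₃ = s₃')

/-- Top-sorts: sorts with no axiom. -/
def Spec.TopSort {S : Type} (sp : Spec S) (s : S) : Prop :=
  s ∈ sp.sorts ∧ ¬ ∃ s', sp.ax s s'

mutual
/-- Well-formed contexts (generic typing, parametrized by a spec, a constant
signature with a validity predicate, and a rewrite system used in conversion). -/
inductive Wf {S C : Type} (sp : Spec S) (sig : C → Tm S C) (valid : C → Prop)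
    (R : Rule S C → Prop) : List (Tm S C) → Prop
  | nil : Wf sp sig valid R []
  | cons {Γ A s} : Typing sp sig valid R Γ A (.sort s) → Wf sp sig valid R (A :: Γ)

/-- Typing judgment Γ ⊢ M : A (conversion modulo βR). -/
inductive Typing {S C : Type} (sp : Spec S) (sig : C → Tm S C) (valid : C → Prop)
    (R : Rule S C → Prop) : List (Tm S C) → Tm S C → Tm S C → Prop
  | var {Γ i A} : Wf sp sig valid R Γ → Γ[i]? = some A →
      Typing sp sig valid R Γ (.var i) (A.lift (i+1) 0)
  | const {Γ c} : Wf sp sig valid R Γ → valid c →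
      Typing sp sig valid R Γ (.const c) (sig c)
  | sort {Γ s₁ s₂} : Wf sp sig valid R Γ → sp.ax s₁ s₂ →
      Typing sp sig valid R Γ (.sort s₁) (.sort s₂)
  | pi {Γ A B s₁ s₂ s₃} : Typing sp sig valid R Γ A (.sort s₁) →
      Typing sp sig valid R (A :: Γ) B (.sort s₂) → sp.ru s₁ s₂ s₃ →
      Typing sp sig valid R Γ (.pi A B) (.sort s₃)
  | lam {Γ A M B s} : Typing sp sig valid R (A :: Γ) M B →
      Typing sp sig valid R Γ (.pi A B) (.sort s) →
      Typing sp sig valid R Γ (.lam A M) (.pi A B)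
  | app {Γ M N A B} : Typing sp sig valid R Γ M (.pi A B) →
      Typing sp sig valid R Γ N A →
      Typing sp sig valid R Γ (.app M N) (Tm.subst 0 N B)
  | conv {Γ M A B s} : Typing sp sig valid R Γ M A →
      Typing sp sig valid R Γ B (.sort s) → Conv R A B →
      Typing sp sig valid R Γ M B
end

/-- Typing in a pure type system λS (no constants, no rewriting). -/
abbrev PTyping {S : Type} (sp : Spec S) :
    List (Tm S Empty) → Tm S Empty → Tm S Empty → Prop :=
  Typing sp (fun c => c.elim) (fun _ => False) NoRules

abbrev PWf {S : Type} (sp : Spec S) : List (Tm S Empty) → Prop :=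
  Wf sp (fun c => c.elim) (fun _ => False) NoRules

/-- The two sorts of the λΠ-calculus. -/
inductive LSort : Type
  | ty : LSort
  | kd : LSort

/-- The specification of the λΠ-calculus: Type : Kind, rules (Type,Type,Type),(Type,Kind,Kind). -/
def lpiSpec : Spec LSort where
  sorts := Set.univ
  ax s₁ s₂ := s₁ = .ty ∧ s₂ = .kd
  ru s₁ s₂ s₃ := s₁ = .ty ∧ ((s₂ = .ty ∧ s₃ = .ty) ∨ (s₂ = .kd ∧ s₃ = .kd))

/-- A rewrite rule is well-typed in the signature when both sides have a common type
in the plain λΠ-calculus (no rewriting) over that signature. -/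
def RuleWellTyped {C : Type} (sig : C → Tm LSort C) (valid : C → Prop)
    (ρ : Rule LSort C) : Prop :=
  ∃ A, Typing lpiSpec sig valid NoRules ρ.1 ρ.2.1 A ∧
       Typing lpiSpec sig valid NoRules ρ.1 ρ.2.2 A

/-- Well-formed signature: every constant's type is a λΠ type in the empty context. -/
def SigWellFormed {C : Type} (sig : C → Tm LSort C) (valid : C → Prop) : Prop :=
  ∀ c, valid c → ∃ s, Typing lpiSpec sig valid NoRules [] (sig c) (.sort s)

/-- Constants of the Cousineau–Dowek signature Σ_S. -/
inductive Const (S : Type) : Type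
  | u : S → Const S
  | eps : S → Const S
  | dot : S → S → Const S
  | pidot : S → S → S → Const S

/-- Types of the constants of Σ_S. -/
def sigS {S : Type} : Const S → Tm LSort (Const S)
  | .u _ => .sort .ty
  | .eps s => .pi (.const (.u s)) (.sort .ty)
  | .dot _ s₂ => .const (.u s₂)
  | .pidot s₁ s₂ s₃ =>
      .pi (.const (.u s₁))
        (.pi (.pi (.app (.const (.eps s₁)) (.var 0)) (.const (.u s₂))) (.const (.u s₃)))

/-- Valid constants of Σ_S (u_s, ε_s for sorts; ṡ₁ : u_{s₂} for axioms; π̇ for rules). -/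
def validS {S : Type} (sp : Spec S) : Const S → Prop
  | .u s => s ∈ sp.sorts
  | .eps s => s ∈ sp.sorts
  | .dot s₁ s₂ => sp.ax s₁ s₂
  | .pidot s₁ s₂ s₃ => sp.ru s₁ s₂ s₃

/-- The rewrite system R_S: ε_{s₂} ṡ₁ ↝ u_{s₁} and
ε_{s₃}(π̇_{s₁s₂s₃} A B) ↝ Πx:(ε_{s₁}A). ε_{s₂}(B x). -/
inductive RS {S : Type} (sp : Spec S) : Rule LSort (Const S) → Prop
  | axRule {s₁ s₂} : sp.ax s₁ s₂ →
      RS sp ([], .app (.const (.eps s₂)) (.const (.dot s₁ s₂)), .const (.u s₁))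
  | piRule {s₁ s₂ s₃} : sp.ru s₁ s₂ s₃ →
      RS sp ([.pi (.app (.const (.eps s₁)) (.var 0)) (.const (.u s₂)), .const (.u s₁)],
             .app (.const (.eps s₃)) (.app (.app (.const (.pidot s₁ s₂ s₃)) (.var 1)) (.var 0)),
             .pi (.app (.const (.eps s₁)) (.var 1)) (.app (.const (.eps s₂)) (.app (.var 1) (.var 0))))

/-- Typing in λΠ/S. -/
abbrev LTyping {S : Type} (sp : Spec S) :
    List (Tm LSort (Const S)) → Tm LSort (Const S) → Tm LSort (Const S) → Prop :=
  Typing lpiSpec sigS (validS sp) (RS sp)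

abbrev LWf {S : Type} (sp : Spec S) : List (Tm LSort (Const S)) → Prop :=
  Wf lpiSpec sigS (validS sp) (RS sp)

mutual
/-- Forward translation of terms: |M|_Γ = M'. -/
inductive TrT {S : Type} (sp : Spec S) :
    List (Tm S Empty) → Tm S Empty → Tm LSort (Const S) → Prop
  | sort {Γ s s'} : sp.ax s s' → TrT sp Γ (.sort s) (.const (.dot s s'))
  | var {Γ i} : TrT sp Γ (.var i) (.var i)
  | app {Γ M M' N N'} : TrT sp Γ M M' → TrT sp Γ N N' →
      TrT sp Γ (.app M N) (.app M' N')
  | lam {Γ A A' M M'} : TrTy sp Γ A A' → TrT sp (A :: Γ) M M' →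
      TrT sp Γ (.lam A M) (.lam A' M')
  | pi {Γ A B s₁ s₂ s₃ A' A'' B'} : PTyping sp Γ A (.sort s₁) →
      PTyping sp (A :: Γ) B (.sort s₂) → sp.ru s₁ s₂ s₃ →
      TrT sp Γ A A' → TrTy sp Γ A A'' → TrT sp (A :: Γ) B B' →
      TrT sp Γ (.pi A B) (.app (.app (.const (.pidot s₁ s₂ s₃)) A') (.lam A'' B'))

/-- Forward translation of types: ‖A‖_Γ = A'. -/
inductive TrTy {S : Type} (sp : Spec S) :
    List (Tm S Empty) → Tm S Empty → Tm LSort (Const S) → Prop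
  | sort {Γ s} : TrTy sp Γ (.sort s) (.const (.u s))
  | pi {Γ A A' B B'} : TrTy sp Γ A A' → TrTy sp (A :: Γ) B B' →
      TrTy sp Γ (.pi A B) (.pi A' B')
  | el {Γ A s A'} : PTyping sp Γ A (.sort s) → TrT sp Γ A A' →
      TrTy sp Γ A (.app (.const (.eps s)) A')
end

/-- Forward translation of contexts ‖Γ‖. -/
inductive TrCtx {S : Type} (sp : Spec S) :
    List (Tm S Empty) → List (Tm LSort (Const S)) → Prop
  | nil : TrCtx sp [] []
  | cons {Γ Γ' A A'} : TrCtx sp Γ Γ' → TrTy sp Γ A A' → TrCtx sp (A :: Γ) (A' :: Γ')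

mutual
/-- Inverse translation of terms: φ(M) = M'. -/
inductive InvT {S : Type} : Tm LSort (Const S) → Tm S Empty → Prop
  | dot {s₁ s₂} : InvT (.const (.dot s₁ s₂)) (.sort s₁)
  | pidot {s₁ s₂ s₃} : InvT (.const (.pidot s₁ s₂ s₃))
      (.lam (.sort s₁) (.lam (.pi (.var 0) (.sort s₂))
        (.pi (.var 1) (.app (.var 1) (.var 0)))))
  | var {i} : InvT (.var i) (.var i)
  | app {M M' N N'} : InvT M M' → InvT N N' → InvT (.app M N) (.app M' N')
  | lam {A A' M M'} : InvTy A A' → InvT M M' → InvT (.lam A M) (.lam A' M')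

/-- Inverse translation of types: ψ(A) = A'. -/
inductive InvTy {S : Type} : Tm LSort (Const S) → Tm S Empty → Prop
  | u {s} : InvTy (.const (.u s)) (.sort s)
  | el {s M M'} : InvT M M' → InvTy (.app (.const (.eps s)) M) M'
  | pi {A A' B B'} : InvTy A A' → InvTy B B' → InvTy (.pi A B) (.pi A' B')
end

/-- Inverse translation of (object) contexts ψ(Γ). -/
inductive InvCtx {S : Type} : List (Tm LSort (Const S)) → List (Tm S Empty) → Prop
  | nil : InvCtx [] []
  | cons {Γ Γ' A A'} : InvCtx Γ Γ' → InvTy A A' → InvCtx (A :: Γ) (A' :: Γ')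

/-- The minimal completion S* of S: a fresh top-sort τ, axioms s:τ for the top-sorts
of S, and rules (s₁,s₂,τ) for all pairs having no rule. -/
def mc {S : Type} (sp : Spec S) (τ : S) : Spec S where
  sorts := insert τ sp.sorts
  ax s₁ s₂ := sp.ax s₁ s₂ ∨ (s₁ ∈ sp.sorts ∧ (¬ ∃ s, sp.ax s₁ s) ∧ s₂ = τ)
  ru s₁ s₂ s₃ := sp.ru s₁ s₂ s₃ ∨
      (s₁ ∈ insert τ sp.sorts ∧ s₂ ∈ insert τ sp.sorts ∧ (¬ ∃ s, sp.ru s₁ s₂ s) ∧ s₃ = τ)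

/-- S' is a completion of S. -/
def IsCompletion {S : Type} (sp sp' : Spec S) : Prop :=
  sp.sorts ⊆ sp'.sorts ∧
  (∀ s₁ s₂, sp.ax s₁ s₂ → sp'.ax s₁ s₂) ∧
  (∀ s₁ s₂ s₃, sp.ru s₁ s₂ s₃ → sp'.ru s₁ s₂ s₃) ∧
  (∀ s₁ ∈ sp.sorts, ∃ s₂, sp'.ax s₁ s₂) ∧
  (∀ s₁ ∈ sp'.sorts, ∀ s₂ ∈ sp'.sorts, ∃ s₃, sp'.ru s₁ s₂ s₃)

/-- Kind-level β-reduction in a λΠ-calculus modulo: contraction of a β-redex whose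
type has type Kind, under any context. -/
inductive KindStep {C : Type} (sig : C → Tm LSort C) (valid : C → Prop)
    (R : Rule LSort C → Prop) : List (Tm LSort C) → Tm LSort C → Tm LSort C → Prop
  | beta {Γ A M N T} :
      Typing lpiSpec sig valid R Γ (.app (.lam A M) N) T →
      Typing lpiSpec sig valid R Γ T (.sort .kd) →
      KindStep sig valid R Γ (.app (.lam A M) N) (Tm.subst 0 N M)
  | appL {Γ M M' N} : KindStep sig valid R Γ M M' →
      KindStep sig valid R Γ (.app M N) (.app M' N)
  | appR {Γ M N N'} : KindStep sig valid R Γ N N' →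
      KindStep sig valid R Γ (.app M N) (.app M N')
  | lamA {Γ A A' M} : KindStep sig valid R Γ A A' →
      KindStep sig valid R Γ (.lam A M) (.lam A' M)
  | lamM {Γ A M M'} : KindStep sig valid R (A :: Γ) M M' →
      KindStep sig valid R Γ (.lam A M) (.lam A M')
  | piA {Γ A A' B} : KindStep sig valid R Γ A A' →
      KindStep sig valid R Γ (.pi A B) (.pi A' B)
  | piB {Γ A B B'} : KindStep sig valid R (A :: Γ) B B' →
      KindStep sig valid R Γ (.pi A B) (.pi A B')

/-- A term with no Kind-level β-redexes (a λΠ⁻ term). -/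
def KindFree {C : Type} (sig : C → Tm LSort C) (valid : C → Prop)
    (R : Rule LSort C → Prop) (Γ : List (Tm LSort C)) (M : Tm LSort C) : Prop :=
  ∀ N, ¬ KindStep sig valid R Γ M N

/-- Object contexts of λΠ/S: every declared type has type Type. -/
def ObjCtx {S : Type} (sp : Spec S) (Γ : List (Tm LSort (Const S))) : Prop :=
  ∀ i A, Γ[i]? = some A → LTyping sp (Γ.drop (i+1)) A (.sort .ty)

/-- The τ-height measure ℋ_τ on Γ-types of λS*. -/
inductive Ht {S : Type} (sp : Spec S) (τ : S) :
    List (Tm S Empty) → Tm S Empty → Nat → Prop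
  | ntau {Γ A s} : PTyping (mc sp τ) Γ A (.sort s) → s ≠ τ → Ht sp τ Γ A 0
  | srt {Γ s'} : PTyping (mc sp τ) Γ (.sort s') (.sort τ) → Ht sp τ Γ (.sort s') 0
  | pi {Γ B C m n} : PTyping (mc sp τ) Γ (.pi B C) (.sort τ) →
      Ht sp τ Γ B m → Ht sp τ (B :: Γ) C n → Ht sp τ Γ (.pi B C) (max m n + 1)

/-- The reducibility predicate, stratified by the τ-height of the type. -/
def RedN {S : Type} (sp : Spec S) (τ : S) :
    Nat → List (Tm S Empty) → Tm S Empty → Tm S Empty → Prop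
  | n, Γ, M, A =>
    PWf sp Γ ∧ ∃ s, PTyping (mc sp τ) Γ M A ∧ PTyping (mc sp τ) Γ A (.sort s) ∧
      ((s ≠ τ ∨ ∃ s' ∈ sp.sorts, A = .sort s') →
        ∃ M' A', BetaRed M M' ∧ BetaRed A A' ∧ PTyping sp Γ M' A') ∧
      (s = τ → ∀ B C, A = .pi B C → ∀ N,
        (∀ m (hm : m < n), Ht sp τ Γ B m → RedN sp τ m Γ N B) →
        ∀ m (hm : m < n), Ht sp τ Γ (Tm.subst 0 N C) m →
          RedN sp τ m Γ (.app M N) (Tm.subst 0 N C))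
  termination_by n => n

/-- The reducibility predicate Γ ⊨_S M : A. -/
def Reducible {S : Type} (sp : Spec S) (τ : S)
    (Γ : List (Tm S Empty)) (M A : Tm S Empty) : Prop :=
  ∃ n, Ht sp τ Γ A n ∧ RedN sp τ n Γ M A

/-!
Induction on the height `n` of `A`. For the first clause of `RedN`, `M` reduces to some `M₀`
typable in λS; as `M'` is β-convertible to `M`, confluence gives a common reduct of `M'` and
`M₀`, which is still typable in λS by subject reduction. For the clause at Π-types of sort `τ`,
`M N ≡β M' N` and the codomain `C[N]` has smaller height, so the induction hypothesis applies
to the applications.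

Subject reduction for λS is the usual PTS metatheory (weakening, substitution, context
conversion, generation, correctness of types); confluence of β is proved with parallel
reduction and Takahashi's complete development.
-/

namespace Tm

variable {S C : Type}

@[simp] theorem lift_zero (M : Tm S C) (k : Nat) : M.lift 0 k = M := by
  induction M generalizing k <;> simp [lift, *]

theorem lift_lift_of_le {k k' d : Nat} (h₁ : k ≤ k') (h₂ : k' ≤ k + d) (M : Tm S C)
    (d' : Nat) : (M.lift d k).lift d' k' = M.lift (d + d') k := by
  induction M generalizing k k' with
  | var i => simp only [lift]; split_ifs <;> simp only [lift] <;> split_ifs <;> grind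
  | sort | const => rfl
  | app m n ihm ihn => simp only [lift, ihm h₁ h₂, ihn h₁ h₂]
  | lam a m iha ihm | pi a m iha ihm =>
      simp only [lift, iha h₁ h₂, ihm (Nat.succ_le_succ h₁) (by omega)]

theorem lift_lift_comm {k k' : Nat} (h : k ≤ k') (M : Tm S C) (d d' : Nat) :
    (M.lift d k).lift d' (k' + d) = (M.lift d' k').lift d k := by
  induction M generalizing k k' with
  | var i => simp only [lift]; split_ifs <;> simp only [lift] <;> split_ifs <;> grind
  | sort | const => rfl
  | app m n ihm ihn => simp only [lift, ihm h, ihn h]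
  | lam a m iha ihm | pi a m iha ihm =>
      simp only [lift, iha h, Nat.add_right_comm k' d 1, ihm (Nat.succ_le_succ h)]

theorem lift_subst_of_le {j k : Nat} (h : j ≤ k) (M N : Tm S C) (d : Nat) :
    (subst k N M).lift d j = subst (k + d) N (M.lift d j) := by
  induction M generalizing j k with
  | var i =>
      simp only [lift, subst]
      split_ifs <;> simp only [lift, subst] <;> split_ifs <;>
        first | grind | rw [lift_lift_of_le (Nat.zero_le _) (by omega)]
  | sort | const => rfl
  | app m n ihm ihn => simp only [lift, subst, ihm h, ihn h]
  | lam a m iha ihm | pi a m iha ihm =>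
      simp only [lift, subst, iha h, Nat.add_right_comm k d 1, ihm (Nat.succ_le_succ h)]

theorem subst_lift_of_le {k j d : Nat} (h₁ : k ≤ j) (h₂ : j ≤ k + d) (M N : Tm S C) :
    subst j N (M.lift (d + 1) k) = M.lift d k := by
  induction M generalizing k j with
  | var i => simp only [lift]; split_ifs <;> simp only [subst] <;> split_ifs <;> grind
  | sort | const => rfl
  | app m n ihm ihn => simp only [lift, subst, ihm h₁ h₂, ihn h₁ h₂]
  | lam a m iha ihm | pi a m iha ihm =>
      simp only [lift, subst, iha h₁ h₂, ihm (Nat.succ_le_succ h₁) (by omega)]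

theorem lift_subst (M N : Tm S C) (j k d : Nat) :
    (subst j N M).lift d (k + j) = subst j (N.lift d k) (M.lift d (k + j + 1)) := by
  induction M generalizing j with
  | var i =>
      simp only [lift, subst]
      split_ifs <;> simp only [lift, subst] <;> split_ifs <;>
        first | grind | rw [← lift_lift_comm (Nat.zero_le k)]
  | sort | const => rfl
  | app m n ihm ihn => simp only [lift, subst, ihm, ihn]
  | lam a m iha ihm | pi a m iha ihm =>
      simp only [lift, subst, iha, show k + j + 1 = k + (j + 1) by omega, ihm]

theorem subst_subst (M N P : Tm S C) (j k : Nat) :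
    subst (k + j) N (subst j P M) = subst j (subst k N P) (subst (k + j + 1) N M) := by
  induction M generalizing j with
  | var i =>
      simp only [subst]
      split_ifs <;> (try simp only [subst]) <;> (try split_ifs) <;>
        first
        | grind
        | rw [← lift_subst_of_le (Nat.zero_le _)]
        | rw [subst_lift_of_le (Nat.zero_le _) (by omega)]
  | sort | const => rfl
  | app m n ihm ihn => simp only [subst, ihm, ihn]
  | lam a m iha ihm | pi a m iha ihm =>
      simp only [subst, iha, show k + j + 1 = k + (j + 1) by omega, ihm]

theorem lift_subst_zero (M N : Tm S C) (d k : Nat) :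
    (subst 0 N M).lift d k = subst 0 (N.lift d k) (M.lift d (k + 1)) :=
  lift_subst M N 0 k d

theorem subst_subst_zero (M N P : Tm S C) (k : Nat) :
    subst k N (subst 0 P M) = subst 0 (subst k N P) (subst (k + 1) N M) :=
  subst_subst M N P 0 k

end Tm

open Tm Relation

section Beta

variable {S C : Type}

/-- `Step NoRules` without its vacuous rewriting constructor, so that it can be inverted by
`cases`. -/
inductive BetaStep : Tm S C → Tm S C → Prop
  | beta {A M N} : BetaStep (.app (.lam A M) N) (subst 0 N M)
  | appL {M M' N} : BetaStep M M' → BetaStep (.app M N) (.app M' N)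
  | appR {M N N'} : BetaStep N N' → BetaStep (.app M N) (.app M N')
  | lamA {A A' M} : BetaStep A A' → BetaStep (.lam A M) (.lam A' M)
  | lamM {A M M'} : BetaStep M M' → BetaStep (.lam A M) (.lam A M')
  | piA {A A' B} : BetaStep A A' → BetaStep (.pi A B) (.pi A' B)
  | piB {A B B'} : BetaStep B B' → BetaStep (.pi A B) (.pi A B')

theorem step_noRules_iff {M N : Tm S C} : Step NoRules M N ↔ BetaStep M N := by
  constructor <;> intro h <;> induction h
  case mp.rew hr => exact hr.elim
  all_goals constructor <;> assumption

theorem BetaStep.lift {M M' : Tm S C} (h : BetaStep M M') (d k : Nat) :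
    BetaStep (M.lift d k) (M'.lift d k) := by
  induction h generalizing k with
  | beta => rw [lift_subst_zero]; exact .beta
  | appL _ ih => exact .appL (ih k)
  | appR _ ih => exact .appR (ih k)
  | lamA _ ih => exact .lamA (ih k)
  | lamM _ ih => exact .lamM (ih (k + 1))
  | piA _ ih => exact .piA (ih k)
  | piB _ ih => exact .piB (ih (k + 1))

theorem BetaStep.subst {M M' : Tm S C} (h : BetaStep M M') (k : Nat) (N : Tm S C) :
    BetaStep (subst k N M) (subst k N M') := by
  induction h generalizing k with
  | beta => rw [subst_subst_zero]; exact .beta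
  | appL _ ih => exact .appL (ih k)
  | appR _ ih => exact .appR (ih k)
  | lamA _ ih => exact .lamA (ih k)
  | lamM _ ih => exact .lamM (ih (k + 1))
  | piA _ ih => exact .piA (ih k)
  | piB _ ih => exact .piB (ih (k + 1))

theorem betaConv_map {f : Tm S C → Tm S C}
    (hf : ∀ a b, BetaStep a b → BetaStep (f a) (f b)) {a b : Tm S C} (h : BetaConv a b) :
    BetaConv (f a) (f b) := by
  induction h with
  | rel _ _ hs => exact .rel _ _ (step_noRules_iff.2 (hf _ _ (step_noRules_iff.1 hs)))
  | refl => exact .refl _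
  | symm _ _ _ ih => exact ih.symm
  | trans _ _ _ _ _ ih₁ ih₂ => exact ih₁.trans _ _ _ ih₂

theorem betaRed_map {f : Tm S C → Tm S C}
    (hf : ∀ a b, BetaStep a b → BetaStep (f a) (f b)) {a b : Tm S C} (h : BetaRed a b) :
    BetaRed (f a) (f b) :=
  ReflTransGen.lift f (fun _ _ hs => step_noRules_iff.2 (hf _ _ (step_noRules_iff.1 hs))) _ _ h

theorem betaConv_lift {M M' : Tm S C} (d k : Nat) (h : BetaConv M M') :
    BetaConv (M.lift d k) (M'.lift d k) :=
  betaConv_map (fun _ _ hs => hs.lift d k) h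

theorem betaConv_subst {M M' : Tm S C} (k : Nat) (N : Tm S C) (h : BetaConv M M') :
    BetaConv (subst k N M) (subst k N M') :=
  betaConv_map (fun _ _ hs => hs.subst k N) h

theorem betaConv_app_left {M M' : Tm S C} (N : Tm S C) (h : BetaConv M M') :
    BetaConv (.app M N) (.app M' N) :=
  betaConv_map (fun _ _ hs => .appL hs) h

theorem betaConv_of_betaRed {M M' : Tm S C} (h : BetaRed M M') : BetaConv M M' :=
  EqvGen.reflTransGen_le_eqvGen _ _ _ h

theorem betaRed_app {M M' N N' : Tm S C} (hM : BetaRed M M') (hN : BetaRed N N') :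
    BetaRed (.app M N) (.app M' N') :=
  (betaRed_map (fun _ _ => .appL) hM).trans (betaRed_map (fun _ _ => .appR) hN)

theorem betaRed_lam {A A' M M' : Tm S C} (hA : BetaRed A A') (hM : BetaRed M M') :
    BetaRed (.lam A M) (.lam A' M') :=
  (betaRed_map (fun _ _ => .lamA) hA).trans (betaRed_map (fun _ _ => .lamM) hM)

theorem betaRed_pi {A A' B B' : Tm S C} (hA : BetaRed A A') (hB : BetaRed B B') :
    BetaRed (.pi A B) (.pi A' B') :=
  (betaRed_map (fun _ _ => .piA) hA).trans (betaRed_map (fun _ _ => .piB) hB)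

theorem exists_eq_pi_of_betaRed_pi {A B T : Tm S C} (h : BetaRed (.pi A B) T) :
    ∃ A' B', T = .pi A' B' ∧ BetaRed A A' ∧ BetaRed B B' := by
  induction h with
  | refl => exact ⟨A, B, rfl, .refl, .refl⟩
  | tail _ hs ih =>
      obtain ⟨A', B', rfl, hA, hB⟩ := ih
      cases step_noRules_iff.1 hs with
      | piA hA' => exact ⟨_, B', rfl, hA.tail (step_noRules_iff.2 hA'), hB⟩
      | piB hB' => exact ⟨A', _, rfl, hA, hB.tail (step_noRules_iff.2 hB')⟩

end Beta

section Confluence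

variable {S C : Type}

inductive Par : Tm S C → Tm S C → Prop
  | sort (s : S) : Par (.sort s) (.sort s)
  | const (c : C) : Par (.const c) (.const c)
  | var (i : Nat) : Par (.var i) (.var i)
  | app {M M' N N'} : Par M M' → Par N N' → Par (.app M N) (.app M' N')
  | lam {A A' M M'} : Par A A' → Par M M' → Par (.lam A M) (.lam A' M')
  | pi {A A' B B'} : Par A A' → Par B B' → Par (.pi A B) (.pi A' B')
  | beta {A M M' N N'} : Par M M' → Par N N' → Par (.app (.lam A M) N) (subst 0 N' M')

namespace Par

theorem refl (M : Tm S C) : Par M M := by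
  induction M with
  | sort s => exact .sort s
  | const c => exact .const c
  | var i => exact .var i
  | app _ _ ihm ihn => exact .app ihm ihn
  | lam _ _ iha ihm => exact .lam iha ihm
  | pi _ _ iha ihb => exact .pi iha ihb

theorem of_betaStep {M N : Tm S C} (h : BetaStep M N) : Par M N := by
  induction h with
  | beta => exact .beta (.refl _) (.refl _)
  | appL _ ih => exact .app ih (.refl _)
  | appR _ ih => exact .app (.refl _) ih
  | lamA _ ih => exact .lam ih (.refl _)
  | lamM _ ih => exact .lam (.refl _) ih
  | piA _ ih => exact .pi ih (.refl _)
  | piB _ ih => exact .pi (.refl _) ih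

theorem betaRed {M N : Tm S C} (h : Par M N) : BetaRed M N := by
  induction h with
  | sort | const | var => exact .refl
  | app _ _ ihm ihn => exact betaRed_app ihm ihn
  | lam _ _ iha ihm => exact betaRed_lam iha ihm
  | pi _ _ iha ihb => exact betaRed_pi iha ihb
  | beta _ _ ihm ihn => exact (betaRed_app (betaRed_lam .refl ihm) ihn).tail Step.beta

theorem lift {M M' : Tm S C} (h : Par M M') (d k : Nat) : Par (M.lift d k) (M'.lift d k) := by
  induction h generalizing k with
  | sort s => exact .sort s
  | const c => exact .const c
  | var i => exact .refl _
  | app _ _ ihm ihn => exact .app (ihm k) (ihn k)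
  | lam _ _ iha ihm => exact .lam (iha k) (ihm (k + 1))
  | pi _ _ iha ihb => exact .pi (iha k) (ihb (k + 1))
  | beta _ _ ihm ihn => rw [lift_subst_zero]; exact .beta (ihm (k + 1)) (ihn k)

theorem subst {M M' N N' : Tm S C} (h : Par M M') (hN : Par N N') (k : Nat) :
    Par (subst k N M) (subst k N' M') := by
  induction h generalizing k with
  | sort s => exact .sort s
  | const c => exact .const c
  | var i =>
      simp only [Tm.subst]
      split_ifs
      · exact .refl _
      · exact hN.lift k 0
      · exact .refl _
  | app _ _ ihm ihn => exact .app (ihm k) (ihn k)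
  | lam _ _ iha ihm => exact .lam (iha k) (ihm (k + 1))
  | pi _ _ iha ihb => exact .pi (iha k) (ihb (k + 1))
  | beta _ _ ihm ihn => rw [subst_subst_zero]; exact .beta (ihm (k + 1)) (ihn k)

end Par

def develop : Tm S C → Tm S C
  | .app (.lam _ M) N => subst 0 (develop N) (develop M)
  | .app M N => .app (develop M) (develop N)
  | .lam A M => .lam (develop A) (develop M)
  | .pi A B => .pi (develop A) (develop B)
  | M => M

/-- Takahashi's triangle property, which makes `Par` have the diamond property. -/
theorem Par.develop {M N : Tm S C} (h : Par M N) : Par N (develop M) := by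
  induction h with
  | sort s => exact .sort s
  | const c => exact .const c
  | var i => exact .var i
  | app hM _ ihM ihN =>
      cases hM with
      | lam => cases ihM with | lam _ ihP => exact .beta ihP ihN
      | _ => exact .app ihM ihN
  | lam _ _ iha ihm => exact .lam iha ihm
  | pi _ _ iha ihb => exact .pi iha ihb
  | beta _ _ ihm ihn => exact ihm.subst ihn 0

theorem betaRed_iff_reflTransGen_par {M N : Tm S C} :
    BetaRed M N ↔ ReflTransGen Par M N := by
  constructor
  · exact ReflTransGen.mono (fun _ _ hs => Par.of_betaStep (step_noRules_iff.1 hs)) _ _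
  · intro h
    induction h with
    | refl => exact .refl
    | tail _ hp ih => exact ih.trans hp.betaRed

theorem beta_confluent : Confluent (Step (S := S) (C := C) NoRules) := by
  intro a b c hab hac
  obtain ⟨d, hbd, hcd⟩ := church_rosser
    (fun a b c hb hc => ⟨develop a, .single hb.develop, .single hc.develop⟩)
    (betaRed_iff_reflTransGen_par.1 hab) (betaRed_iff_reflTransGen_par.1 hac)
  exact ⟨d, betaRed_iff_reflTransGen_par.2 hbd, betaRed_iff_reflTransGen_par.2 hcd⟩

theorem BetaConv.exists_betaRed {M N : Tm S C} (h : BetaConv M N) :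
    ∃ P, BetaRed M P ∧ BetaRed N P := by
  induction h with
  | rel _ N hs => exact ⟨N, .single hs, .refl⟩
  | refl M => exact ⟨M, .refl, .refl⟩
  | symm _ _ _ ih => obtain ⟨P, h₁, h₂⟩ := ih; exact ⟨P, h₂, h₁⟩
  | trans _ N _ _ _ ih₁ ih₂ =>
      obtain ⟨P₁, hMP₁, hNP₁⟩ := ih₁
      obtain ⟨P₂, hNP₂, hKP₂⟩ := ih₂
      obtain ⟨P, hP₁, hP₂⟩ := beta_confluent N P₁ P₂ hNP₁ hNP₂
      exact ⟨P, hMP₁.trans hP₁, hKP₂.trans hP₂⟩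

theorem BetaConv.pi_inj {A B A' B' : Tm S C} (h : BetaConv (.pi A B) (.pi A' B')) :
    BetaConv A A' ∧ BetaConv B B' := by
  obtain ⟨P, h₁, h₂⟩ := h.exists_betaRed
  obtain ⟨A₁, B₁, rfl, hA₁, hB₁⟩ := exists_eq_pi_of_betaRed_pi h₁
  obtain ⟨A₂, B₂, heq, hA₂, hB₂⟩ := exists_eq_pi_of_betaRed_pi h₂
  cases heq
  exact ⟨(betaConv_of_betaRed hA₁).trans _ _ _ (betaConv_of_betaRed hA₂).symm,
    (betaConv_of_betaRed hB₁).trans _ _ _ (betaConv_of_betaRed hB₂).symm⟩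

end Confluence

section PTS

variable {S : Type} {sp : Spec S}

/-- Induction on `PTyping` with the trivial motive on contexts and the vacuous constant case
removed. -/
@[elab_as_elim]
theorem PTyping.induction
    {motive : ∀ Γ M A, PTyping sp Γ M A → Prop}
    (var : ∀ {Γ i A} (hΓ : PWf sp Γ) (hi : Γ[i]? = some A),
      motive Γ (.var i) _ (.var hΓ hi))
    (sort : ∀ {Γ s₁ s₂} (hΓ : PWf sp Γ) (hs : sp.ax s₁ s₂),
      motive Γ (.sort s₁) (.sort s₂) (.sort hΓ hs))
    (pi : ∀ {Γ A B s₁ s₂ s₃} (hA : PTyping sp Γ A (.sort s₁))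
      (hB : PTyping sp (A :: Γ) B (.sort s₂)) (hs : sp.ru s₁ s₂ s₃),
      motive Γ A _ hA → motive (A :: Γ) B _ hB →
      motive Γ (.pi A B) (.sort s₃) (.pi hA hB hs))
    (lam : ∀ {Γ A M B s} (hM : PTyping sp (A :: Γ) M B)
      (hAB : PTyping sp Γ (.pi A B) (.sort s)),
      motive (A :: Γ) M B hM → motive Γ (.pi A B) _ hAB →
      motive Γ (.lam A M) _ (.lam hM hAB))
    (app : ∀ {Γ M N A B} (hM : PTyping sp Γ M (.pi A B)) (hN : PTyping sp Γ N A),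
      motive Γ M _ hM → motive Γ N A hN → motive Γ (.app M N) _ (.app hM hN))
    (conv : ∀ {Γ M A B s} (hM : PTyping sp Γ M A) (hB : PTyping sp Γ B (.sort s))
      (hAB : BetaConv A B), motive Γ M A hM → motive Γ B _ hB →
      motive Γ M B (.conv hM hB hAB))
    {Γ M A} (h : PTyping sp Γ M A) : motive Γ M A h :=
  Typing.rec (motive_1 := fun _ _ => True) (motive_2 := motive) trivial (fun _ _ => trivial)
    (fun hΓ hi _ => var hΓ hi) (fun _ hc _ => hc.elim) (fun hΓ hs _ => sort hΓ hs)
    pi lam app conv h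

theorem PTyping.wf {Γ M A} (h : PTyping sp Γ M A) : PWf sp Γ := by
  induction h using PTyping.induction with
  | var hΓ | sort hΓ => exact hΓ
  | pi _ _ _ ih | lam _ _ _ ih | app _ _ ih | conv _ _ _ ih => exact ih

theorem PWf.exists_typing_of_getElem? {Γ : List (Tm S Empty)} (hΓ : PWf sp Γ) {i : Nat}
    {A : Tm S Empty} (hi : Γ[i]? = some A) :
    ∃ s, PTyping sp (Γ.drop (i + 1)) A (.sort s) := by
  induction Γ generalizing i with
  | nil => simp at hi
  | cons B Γ ih =>
      obtain _ | ⟨hB⟩ := hΓ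
      cases i with
      | zero => cases hi; exact ⟨_, hB⟩
      | succ i => exact ih (PTyping.wf hB) hi

theorem PTyping.pi_inv {Γ A B T} (h : PTyping sp Γ (.pi A B) T) :
    ∃ s₁ s₂ s₃, PTyping sp Γ A (.sort s₁) ∧ PTyping sp (A :: Γ) B (.sort s₂) ∧
      sp.ru s₁ s₂ s₃ ∧ BetaConv (.sort s₃) T := by
  generalize hP : Tm.pi A B = P at h
  induction h using PTyping.induction with
  | pi hA hB hs => cases hP; exact ⟨_, _, _, hA, hB, hs, .refl _⟩
  | conv _ _ hAB ih =>
      obtain ⟨s₁, s₂, s₃, hA, hB, hs, hT⟩ := ih hP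
      exact ⟨s₁, s₂, s₃, hA, hB, hs, hT.trans _ _ _ hAB⟩
  | _ => cases hP

theorem PTyping.lam_inv {Γ A M T} (h : PTyping sp Γ (.lam A M) T) :
    ∃ B s, PTyping sp (A :: Γ) M B ∧ PTyping sp Γ (.pi A B) (.sort s) ∧
      BetaConv (.pi A B) T := by
  generalize hL : Tm.lam A M = L at h
  induction h using PTyping.induction with
  | lam hM hAB => cases hL; exact ⟨_, _, hM, hAB, .refl _⟩
  | conv _ _ hAB ih =>
      obtain ⟨B, s, hM, hB, hT⟩ := ih hL
      exact ⟨B, s, hM, hB, hT.trans _ _ _ hAB⟩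
  | _ => cases hL

end PTS

section Weakening

variable {S : Type} {sp : Spec S}

/-- The prefix `Δ` of a context `Δ ++ Γ`, adjusted for a new entry inserted before `Γ`. -/
def liftCtx : List (Tm S Empty) → List (Tm S Empty)
  | [] => []
  | A :: Δ => A.lift 1 Δ.length :: liftCtx Δ

@[simp] theorem length_liftCtx (Δ : List (Tm S Empty)) : (liftCtx Δ).length = Δ.length := by
  induction Δ <;> simp [liftCtx, *]

theorem getElem?_liftCtx {Δ : List (Tm S Empty)} {i : Nat} {A : Tm S Empty}
    (h : Δ[i]? = some A) : (liftCtx Δ)[i]? = some (A.lift 1 (Δ.length - i - 1)) := by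
  induction Δ generalizing i with
  | nil => simp at h
  | cons B Δ ih =>
      cases i with
      | zero => cases h; simp [liftCtx]
      | succ i => simpa [liftCtx] using ih h

theorem PTyping.weaken_var {Δ Γ : List (Tm S Empty)} {B A : Tm S Empty} {i : Nat}
    (hi : (Δ ++ Γ)[i]? = some A) (hwf : PWf sp (liftCtx Δ ++ B :: Γ)) :
    PTyping sp (liftCtx Δ ++ B :: Γ) ((Tm.var i).lift 1 Δ.length)
      ((A.lift (i + 1) 0).lift 1 Δ.length) := by
  by_cases hlt : i < Δ.length
  · rw [List.getElem?_append_left hlt] at hi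
    have hi' : (liftCtx Δ ++ B :: Γ)[i]? = some (A.lift 1 (Δ.length - i - 1)) := by
      rw [List.getElem?_append_left (by simpa using hlt)]
      exact getElem?_liftCtx hi
    have hA := lift_lift_comm (Nat.zero_le (Δ.length - i - 1)) A (i + 1) 1
    rw [show Δ.length - i - 1 + (i + 1) = Δ.length by omega] at hA
    simpa [Tm.lift, hlt, hA] using Typing.var hwf hi'
  · rw [List.getElem?_append_right (by omega)] at hi
    have hi' : (liftCtx Δ ++ B :: Γ)[i + 1]? = some A := by
      rw [List.getElem?_append_right (by simp; omega), length_liftCtx,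
        show i + 1 - Δ.length = i - Δ.length + 1 by omega]
      exact hi
    simpa [Tm.lift, hlt, lift_lift_of_le (Nat.zero_le _) (by omega : Δ.length ≤ 0 + (i + 1))]
      using Typing.var hwf hi'

theorem PTyping.weaken {Δ Γ : List (Tm S Empty)} {M A B : Tm S Empty}
    (h : PTyping sp (Δ ++ Γ) M A) (hwf : PWf sp (liftCtx Δ ++ B :: Γ)) :
    PTyping sp (liftCtx Δ ++ B :: Γ) (M.lift 1 Δ.length) (A.lift 1 Δ.length) := by
  generalize hΓ' : Δ ++ Γ = Γ' at h
  induction h using PTyping.induction generalizing Δ with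
  | var _ hi => subst hΓ'; exact PTyping.weaken_var hi hwf
  | sort _ hs => exact .sort hwf hs
  | pi _ _ hs ihA ihB =>
      subst hΓ'
      have hA := ihA hwf rfl
      exact .pi hA (ihB (Δ := _ :: Δ) (.cons hA) rfl) hs
  | lam _ _ ihM ihAB =>
      subst hΓ'
      have hAB := ihAB hwf rfl
      obtain ⟨_, _, _, hA, -⟩ := PTyping.pi_inv hAB
      exact .lam (ihM (Δ := _ :: Δ) (.cons hA) rfl) hAB
  | app _ _ ihM ihN =>
      subst hΓ'
      rw [Tm.lift, lift_subst_zero]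
      exact .app (ihM hwf rfl) (ihN hwf rfl)
  | conv _ _ hAB ihM ihB => exact .conv (ihM hwf hΓ') (ihB hwf hΓ') (betaConv_lift _ _ hAB)

theorem PTyping.weaken_append {Γ Δ : List (Tm S Empty)} {M A : Tm S Empty}
    (h : PTyping sp Γ M A) (hwf : PWf sp (Δ ++ Γ)) :
    PTyping sp (Δ ++ Γ) (M.lift Δ.length 0) (A.lift Δ.length 0) := by
  induction Δ with
  | nil => simpa using h
  | cons B Δ ih =>
      obtain _ | ⟨hB⟩ := hwf
      have h' := PTyping.weaken (Δ := []) (B := B) (ih (PTyping.wf hB))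
        (by simpa [liftCtx] using .cons hB)
      simpa [liftCtx, lift_lift_of_le (Nat.le_refl 0) (Nat.zero_le _)] using h'

end Weakening

section Substitution

variable {S : Type} {sp : Spec S}

/-- The prefix `Δ` of a context `Δ ++ B :: Γ` after substituting `N` for the entry `B`. -/
def substCtx (N : Tm S Empty) : List (Tm S Empty) → List (Tm S Empty)
  | [] => []
  | A :: Δ => subst Δ.length N A :: substCtx N Δ

@[simp] theorem length_substCtx (N : Tm S Empty) (Δ : List (Tm S Empty)) :
    (substCtx N Δ).length = Δ.length := by
  induction Δ <;> simp [substCtx, *]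

theorem getElem?_substCtx {N : Tm S Empty} {Δ : List (Tm S Empty)} {i : Nat} {A : Tm S Empty}
    (h : Δ[i]? = some A) : (substCtx N Δ)[i]? = some (subst (Δ.length - i - 1) N A) := by
  induction Δ generalizing i with
  | nil => simp at h
  | cons B Δ ih =>
      cases i with
      | zero => cases h; simp [substCtx]
      | succ i => simpa [substCtx] using ih h

theorem PTyping.subst_var {Δ Γ : List (Tm S Empty)} {A B N : Tm S Empty} {i : Nat}
    (hi : (Δ ++ B :: Γ)[i]? = some A) (hN : PTyping sp Γ N B)
    (hwf : PWf sp (substCtx N Δ ++ Γ)) :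
    PTyping sp (substCtx N Δ ++ Γ) (Tm.subst Δ.length N (.var i))
      (Tm.subst Δ.length N (A.lift (i + 1) 0)) := by
  rcases Nat.lt_trichotomy i Δ.length with hlt | rfl | hgt
  · rw [List.getElem?_append_left hlt] at hi
    have hi' : (substCtx N Δ ++ Γ)[i]? = some (subst (Δ.length - i - 1) N A) := by
      rw [List.getElem?_append_left (by simpa using hlt)]
      exact getElem?_substCtx hi
    have hA := lift_subst_of_le (Nat.zero_le (Δ.length - i - 1)) A N (i + 1)
    rw [show Δ.length - i - 1 + (i + 1) = Δ.length by omega] at hA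
    simpa [Tm.subst, hlt, hA] using Typing.var hwf hi'
  · obtain rfl : A = B := by simpa using hi.symm
    rw [subst_lift_of_le (k := 0) (Nat.zero_le _) (by omega)]
    simpa [Tm.subst] using hN.weaken_append hwf
  · rw [List.getElem?_append_right hgt.le,
      show i - Δ.length = i - 1 - Δ.length + 1 by omega] at hi
    have hi' : (substCtx N Δ ++ Γ)[i - 1]? = some A := by
      rw [List.getElem?_append_right (by simp; omega), length_substCtx]
      exact hi
    have hv := Typing.var hwf hi'
    rw [show i - 1 + 1 = i by omega] at hv
    have hA := subst_lift_of_le (k := 0) (d := i) (Nat.zero_le Δ.length) (by omega) A N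
    simpa [Tm.subst, show ¬ i < Δ.length by omega, hgt.ne', hA] using hv

theorem PTyping.subst {Δ Γ : List (Tm S Empty)} {M A B N : Tm S Empty}
    (h : PTyping sp (Δ ++ B :: Γ) M A) (hN : PTyping sp Γ N B)
    (hwf : PWf sp (substCtx N Δ ++ Γ)) :
    PTyping sp (substCtx N Δ ++ Γ) (Tm.subst Δ.length N M) (Tm.subst Δ.length N A) := by
  generalize hΓ' : Δ ++ B :: Γ = Γ' at h
  induction h using PTyping.induction generalizing Δ with
  | var _ hi => subst hΓ'; exact PTyping.subst_var hi hN hwf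
  | sort _ hs => exact .sort hwf hs
  | pi _ _ hs ihA ihB =>
      subst hΓ'
      have hA := ihA hwf rfl
      exact .pi hA (ihB (Δ := _ :: Δ) (.cons hA) rfl) hs
  | lam _ _ ihM ihAB =>
      subst hΓ'
      have hAB := ihAB hwf rfl
      obtain ⟨_, _, _, hA, -⟩ := PTyping.pi_inv hAB
      exact .lam (ihM (Δ := _ :: Δ) (.cons hA) rfl) hAB
  | app _ _ ihM ihN =>
      subst hΓ'
      rw [Tm.subst, subst_subst_zero]
      exact .app (ihM hwf rfl) (ihN hwf rfl)
  | conv _ _ hAB ihM ihB => exact .conv (ihM hwf hΓ') (ihB hwf hΓ') (betaConv_subst _ _ hAB)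

theorem PTyping.subst_zero {Γ : List (Tm S Empty)} {M A B N : Tm S Empty}
    (h : PTyping sp (B :: Γ) M A) (hN : PTyping sp Γ N B) :
    PTyping sp Γ (Tm.subst 0 N M) (Tm.subst 0 N A) :=
  PTyping.subst (Δ := []) h hN (PTyping.wf hN)

end Substitution

section SubjectReduction

variable {S : Type} {sp : Spec S}

theorem betaConv_of_betaStep {M N : Tm S Empty} (h : BetaStep M N) : BetaConv M N :=
  .rel _ _ (step_noRules_iff.2 h)

theorem PWf.exists_lift_typing_of_getElem? {Γ : List (Tm S Empty)} (hΓ : PWf sp Γ) {i : Nat}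
    {A : Tm S Empty} (hi : Γ[i]? = some A) :
    ∃ s, PTyping sp Γ (A.lift (i + 1) 0) (.sort s) := by
  obtain ⟨s, hA⟩ := hΓ.exists_typing_of_getElem? hi
  have hlen : (Γ.take (i + 1)).length = i + 1 := by
    have : i < Γ.length := (List.getElem?_eq_some_iff.1 hi).1
    rw [List.length_take]; omega
  have h := hA.weaken_append (Δ := Γ.take (i + 1)) (by rwa [List.take_append_drop])
  rw [hlen, List.take_append_drop] at h
  exact ⟨s, h⟩

theorem PTyping.conv_ctx_var {Δ Γ : List (Tm S Empty)} {A A' C : Tm S Empty} {i : Nat}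
    (hΓ : PWf sp (Δ ++ A :: Γ)) (hi : (Δ ++ A :: Γ)[i]? = some C) (hAA' : BetaConv A A')
    (hwf : PWf sp (Δ ++ A' :: Γ)) : PTyping sp (Δ ++ A' :: Γ) (.var i) (C.lift (i + 1) 0) := by
  have hset : (Δ ++ A :: Γ).set Δ.length A' = Δ ++ A' :: Γ := by simp
  by_cases hne : i = Δ.length
  · subst hne
    obtain rfl : C = A := by simpa using hi.symm
    obtain ⟨s, hC⟩ := hΓ.exists_typing_of_getElem? hi
    simp only [List.drop_length_add_append, List.drop_succ_cons, List.drop_zero] at hC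
    have hC' := hC.weaken_append (Δ := Δ ++ [A']) (by simpa using hwf)
    simp only [List.append_assoc, List.singleton_append,
      List.length_append, List.length_singleton] at hC'
    exact .conv (.var hwf (by simp)) (by simpa [Tm.lift] using hC')
      (betaConv_lift _ _ hAA'.symm)
  · exact .var hwf (by rw [← hset, List.getElem?_set_ne (Ne.symm hne), hi])

theorem PTyping.conv_ctx {Δ Γ : List (Tm S Empty)} {M T A A' : Tm S Empty}
    (h : PTyping sp (Δ ++ A :: Γ) M T) (hAA' : BetaConv A A') (hwf : PWf sp (Δ ++ A' :: Γ)) :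
    PTyping sp (Δ ++ A' :: Γ) M T := by
  generalize hΓ' : Δ ++ A :: Γ = Γ' at h
  induction h using PTyping.induction generalizing Δ with
  | var hΓ hi => subst hΓ'; exact PTyping.conv_ctx_var hΓ hi hAA' hwf
  | sort _ hs => exact .sort hwf hs
  | pi _ _ hs ihA ihB =>
      subst hΓ'
      have hA := ihA hwf rfl
      exact .pi hA (ihB (Δ := _ :: Δ) (.cons hA) rfl) hs
  | lam _ _ ihM ihAB =>
      subst hΓ'
      have hAB := ihAB hwf rfl
      obtain ⟨_, _, _, hA, -⟩ := PTyping.pi_inv hAB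
      exact .lam (ihM (Δ := _ :: Δ) (.cons hA) rfl) hAB
  | app _ _ ihM ihN => exact .app (ihM hwf hΓ') (ihN hwf hΓ')
  | conv _ _ hAB ihM ihB => exact .conv (ihM hwf hΓ') (ihB hwf hΓ') hAB

theorem PTyping.exists_subst_typing_of_pi {Γ : List (Tm S Empty)} {A B N : Tm S Empty} {s : S}
    (hAB : PTyping sp Γ (.pi A B) (.sort s)) (hN : PTyping sp Γ N A) :
    ∃ s', PTyping sp Γ (Tm.subst 0 N B) (.sort s') := by
  obtain ⟨_, s₂, _, -, hB, -⟩ := PTyping.pi_inv hAB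
  exact ⟨s₂, by simpa [Tm.subst] using hB.subst_zero hN⟩

theorem PTyping.type_correct {Γ M T} (h : PTyping sp Γ M T) :
    (∃ s, T = .sort s) ∨ ∃ s, PTyping sp Γ T (.sort s) := by
  induction h using PTyping.induction with
  | var hΓ hi => exact .inr (hΓ.exists_lift_typing_of_getElem? hi)
  | sort => exact .inl ⟨_, rfl⟩
  | pi => exact .inl ⟨_, rfl⟩
  | lam _ hAB => exact .inr ⟨_, hAB⟩
  | app _ hN ihM =>
      obtain ⟨_, hAB⟩ := ihM.resolve_left (by simp)
      exact .inr (hAB.exists_subst_typing_of_pi hN)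
  | conv _ hB => exact .inr ⟨_, hB⟩

theorem PTyping.subst_body_of_lam {Γ : List (Tm S Empty)} {A₀ M₀ A B N : Tm S Empty} {s : S}
    (hL : PTyping sp Γ (.lam A₀ M₀) (.pi A B)) (hN : PTyping sp Γ N A)
    (hB : PTyping sp Γ (Tm.subst 0 N B) (.sort s)) :
    PTyping sp Γ (Tm.subst 0 N M₀) (Tm.subst 0 N B) := by
  obtain ⟨B₀, _, hM₀, hA₀B₀, hconv⟩ := PTyping.lam_inv hL
  obtain ⟨hA, hB'⟩ := hconv.pi_inj
  obtain ⟨_, _, _, hA₀, -⟩ := PTyping.pi_inv hA₀B₀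
  exact .conv (hM₀.subst_zero (.conv hN hA₀ hA.symm)) hB (betaConv_subst 0 N hB')

theorem PTyping.subject_betaStep {Γ M M' T} (h : PTyping sp Γ M T) (hs : BetaStep M M') :
    PTyping sp Γ M' T := by
  induction h using PTyping.induction generalizing M' with
  | var | sort => cases hs
  | pi hA hB hs' ihA ihB =>
      cases hs with
      | piA hA' =>
          have hA'' := ihA hA'
          have hB' := PTyping.conv_ctx (Δ := []) hB (betaConv_of_betaStep hA') (.cons hA'')
          exact .pi hA'' hB' hs'
      | piB hB' => exact .pi hA (ihB hB') hs'
  | lam hM hAB ihM ihAB =>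
      cases hs with
      | lamA hA' =>
          have hA'B := ihAB (.piA hA')
          obtain ⟨_, _, _, hA'', -⟩ := PTyping.pi_inv hA'B
          have hM' := PTyping.conv_ctx (Δ := []) hM (betaConv_of_betaStep hA') (.cons hA'')
          exact .conv (.lam hM' hA'B) hAB (betaConv_of_betaStep (.piA hA')).symm
      | lamM hM' => exact .lam (ihM hM') hAB
  | @app _ _ _ _ B hM hN ihM ihN =>
      obtain ⟨_, hB⟩ := (hM.type_correct.resolve_left (by simp)).elim
        fun _ hAB => hAB.exists_subst_typing_of_pi hN
      cases hs with
      | beta => exact PTyping.subst_body_of_lam hM hN hB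
      | appL hM' => exact .app (ihM hM') hN
      | appR hN' =>
          have hred := (Par.subst (.refl B) (Par.of_betaStep hN') 0).betaRed
          exact .conv (.app hM (ihN hN')) hB (betaConv_of_betaRed hred).symm
  | conv _ hB hAB ihM => exact .conv (ihM hs) hB hAB

theorem PTyping.subject_betaRed {Γ M M' T} (h : PTyping sp Γ M T) (hr : BetaRed M M') :
    PTyping sp Γ M' T := by
  induction hr with
  | refl => exact h
  | tail _ hs ih => exact ih.subject_betaStep (step_noRules_iff.1 hs)

end SubjectReduction

section Reducibility

variable {S : Type} {sp : Spec S} {τ : S}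

theorem PTyping.exists_betaRed_of_betaConv {Γ : List (Tm S Empty)} {M M' M₀ A₀ : Tm S Empty}
    (hM₀ : BetaRed M M₀) (h₀ : PTyping sp Γ M₀ A₀) (hc : BetaConv M M') :
    ∃ M₁, BetaRed M' M₁ ∧ PTyping sp Γ M₁ A₀ := by
  obtain ⟨P, hMP, hM'P⟩ := hc.exists_betaRed
  obtain ⟨M₁, hM₀M₁, hPM₁⟩ := beta_confluent M M₀ P hM₀ hMP
  exact ⟨M₁, hM'P.trans hPM₁, PTyping.subject_betaRed h₀ hM₀M₁⟩

theorem RedN.typing {n : Nat} {Γ : List (Tm S Empty)} {M A : Tm S Empty}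
    (h : RedN sp τ n Γ M A) : PTyping (mc sp τ) Γ M A := by
  rw [RedN] at h
  obtain ⟨-, _, hM, -⟩ := h
  exact hM

theorem RedN.of_betaConv {n : Nat} {Γ : List (Tm S Empty)} {M M' A : Tm S Empty}
    (hA : Ht sp τ Γ A n) (h : RedN sp τ n Γ M A) (h' : PTyping (mc sp τ) Γ M' A)
    (hc : BetaConv M M') : RedN sp τ n Γ M' A := by
  induction n using Nat.strong_induction_on generalizing Γ M M' A with
  | _ n ih =>
  rw [RedN] at h ⊢
  obtain ⟨hΓ, s, -, hAs, hsub, happ⟩ := h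
  refine ⟨hΓ, s, h', hAs, fun hs => ?_, ?_⟩
  · obtain ⟨M₀, A₀, hM₀, hA₀, h₀⟩ := hsub hs
    obtain ⟨M₁, hM₁, h₁⟩ := PTyping.exists_betaRed_of_betaConv hM₀ h₀ hc
    exact ⟨M₁, A₀, hM₁, hA₀, h₁⟩
  · rintro hs B C rfl N hN m hm hCm
    cases hA with
    | ntau => omega
    | pi _ hB =>
        have hNB := RedN.typing (hN _ (by omega) hB)
        exact ih m hm hCm (happ hs B C rfl N hN m hm hCm) (.app h' hNB) (betaConv_app_left N hc)

end Reducibility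

/-- the reducibility predicate is closed under β-conversion of the
subject. -/
theorem reducible_subject_conv {S : Type} (sp : Spec S) (hfun : sp.Functional)
    (τ : S) (hτ : τ ∉ sp.sorts) {Γ : List (Tm S Empty)} {M M' A : Tm S Empty}
    (h : Reducible sp τ Γ M A) (h' : PTyping (mc sp τ) Γ M' A)
    (hc : BetaConv M M') : Reducible sp τ Γ M' A := by
  obtain ⟨n, hA, hM⟩ := h
  exact ⟨n, hA, hM.of_betaConv hA h' hc⟩
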